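/- arXiv:2306.15359 — 5 statements merged into one kernel-verified Lean document; each statement's English description precedes it below -/
import Mathlib

section
/- Let A be the n×n tridiagonal matrix with diagonal entries α except A_{11} = α+γ and A_{nn} = α+β, superdiagonal entries β, and subdiagonal entries γ. Then the eigenvalues of A are λ_k = α + 2√(βγ)·cos(kπ/n) for k = 1,…,n−1, together with λ_n = α + β + γ. -/
open Matrix

/-- The `n × n` tridiagonal matrix with diagonal `α` except the `(1,1)` entry `α + γ`
and the `(n,n)` entry `α + β`, superdiagonal `β`, subdiagonal `γ`. -/
def triRefl (n : ℕ) (α β γ : ℂ) : Matrix (Fin n) (Fin n) ℂ :=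
  Matrix.of fun i j =>
    if (i : ℕ) = (j : ℕ) then
      α + (if (i : ℕ) = 0 then γ else 0) + (if (i : ℕ) = n - 1 then β else 0)
    else if (i : ℕ) + 1 = (j : ℕ) then β
    else if (j : ℕ) + 1 = (i : ℕ) then γ
    else 0

/-!
An eigenvector `(w 1, …, w n)` of `triRefl n α β γ`, padded with `w 0 = w 1` and
`w (n + 1) = w n`, solves `γ w j + α w (j+1) + β w (j+2) = μ w (j+1)` for `j < n`: the corner
entries are exactly these reflecting boundary conditions.

If `βγ = 0` the matrix is triangular with diagonal entries `α + β + γ` and `α`. Otherwise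
`β ≠ 0`, so a solution is determined by `w 0 = w 1`; with `t = s / β` and
`x = (μ - α) / (2s)` the substitution `w j = t ^ j u j` turns the recurrence into the Chebyshev
recurrence `u (j+2) = 2x u (j+1) - u j`. The solution starting at `w 0 = w 1` meets the right
boundary condition iff `(μ - (α + β + γ)) U_{n-1}(x) = 0`, and the roots of `U_{n-1}` are the
`cos (kπ/n)`, `0 < k < n`.
-/

open Polynomial Polynomial.Chebyshev

theorem Matrix.spectrum_eq_range_diag_of_isUpperTriangular {K ι : Type*} [Field K] [Fintype ι]
    [DecidableEq ι] [LinearOrder ι] {M : Matrix ι ι K} (h : M.IsUpperTriangular) :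
    spectrum K M = Set.range M.diag := by
  ext μ
  simp [mem_spectrum_iff_isRoot_charpoly, charpoly_of_isUpperTriangular M h, eval_prod,
    Finset.prod_eq_zero_iff, sub_eq_zero, eq_comm (a := μ)]

theorem Matrix.spectrum_eq_range_diag_of_isLowerTriangular {K ι : Type*} [Field K] [Fintype ι]
    [DecidableEq ι] [LinearOrder ι] {M : Matrix ι ι K} (h : M.IsLowerTriangular) :
    spectrum K M = Set.range M.diag := by
  ext μ
  rw [mem_spectrum_iff_isRoot_charpoly, ← charpoly_transpose, ← mem_spectrum_iff_isRoot_charpoly,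
    spectrum_eq_range_diag_of_isUpperTriangular (M := Mᵀ) fun i j hij => h hij]
  rfl

theorem eval_U_complex_eq_zero_iff {n : ℕ} (hn : 0 < n) (x : ℂ) :
    (U ℂ ((n : ℤ) - 1)).eval x = 0 ↔
      ∃ k : Fin (n - 1), x = Complex.cos (((k + 1 : ℕ) : ℂ) * Real.pi / n) := by
  obtain ⟨m, rfl⟩ : ∃ m, n = m + 1 := ⟨n - 1, by omega⟩
  have hroots : (U ℂ m).roots =
      ((Finset.range m).image fun k : ℕ => Real.cos ((k + 1) * Real.pi / (m + 1))).val.map (↑) := by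
    rw [← map_U (algebraMap ℝ ℂ), ← roots_U_real]
    refine (roots_map_of_injective_of_card_eq_natDegree (algebraMap ℝ ℂ).injective ?_).symm
    rw [roots_U_real, natDegree_U_natCast, Finset.card_val, Finset.card_image_of_injOn,
      Finset.card_range]
    exact (Finset.range m).nodup_map_iff_injOn.mp (roots_U_real_nodup m)
  push_cast
  rw [add_sub_cancel_right, ← IsRoot.def, ← mem_roots (U_ne_zero ℂ _ (by omega)), hroots]
  simp only [Multiset.mem_map, Finset.mem_val, Finset.mem_image, Finset.mem_range]
  constructor
  · rintro ⟨_, ⟨k, hk, rfl⟩, rfl⟩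
    exact ⟨⟨k, by omega⟩, by push_cast; simp⟩
  · rintro ⟨k, rfl⟩
    exact ⟨_, ⟨k, by omega, rfl⟩, by push_cast; simp⟩

theorem eq_of_recurrence {n : ℕ} {α β γ μ : ℂ} (hβ : β ≠ 0) {w w' : ℕ → ℂ}
    (hw : ∀ j < n, γ * w j + α * w (j + 1) + β * w (j + 2) = μ * w (j + 1))
    (hw' : ∀ j < n, γ * w' j + α * w' (j + 1) + β * w' (j + 2) = μ * w' (j + 1))
    (h0 : w 0 = w' 0) (h1 : w 1 = w' 1) : ∀ j ≤ n + 1, w j = w' j := by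
  have step : ∀ j ≤ n, w j = w' j ∧ w (j + 1) = w' (j + 1) := by
    intro j hj
    induction j with
    | zero => exact ⟨h0, h1⟩
    | succ j ih =>
      obtain ⟨hj0, hj1⟩ := ih (by omega)
      refine ⟨hj1, mul_left_cancel₀ hβ ?_⟩
      linear_combination hw j (by omega) - hw' j (by omega) - γ * hj0 + (μ - α) * hj1
  rintro (_ | j) hj
  · exact h0
  · exact (step j (by omega)).2

/-- `t ^ j u j`, where `u` solves `u (j+2) = 2x u (j+1) - u j` with `u 0 = t`, `u 1 = 1`. -/
noncomputable def chebyshevSeq (t x : ℂ) (j : ℕ) : ℂ :=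
  t ^ j * ((U ℂ ((j : ℤ) - 1)).eval x - t * (U ℂ ((j : ℤ) - 2)).eval x)

theorem chebyshevSeq_zero (t x : ℂ) : chebyshevSeq t x 0 = t := by
  simp [chebyshevSeq, U_neg_one, U_neg_two]

theorem chebyshevSeq_one (t x : ℂ) : chebyshevSeq t x 1 = t := by
  simp [chebyshevSeq, U_neg_one]

theorem chebyshevSeq_recurrence {α β γ μ t x : ℂ} (hγ : β * t ^ 2 = γ)
    (hμ : 2 * β * t * x = μ - α) (j : ℕ) :
    γ * chebyshevSeq t x j + α * chebyshevSeq t x (j + 1) + β * chebyshevSeq t x (j + 2) =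
      μ * chebyshevSeq t x (j + 1) := by
  have h1 := congrArg (eval x) (U_add_one ℂ (j : ℤ))
  have h2 := congrArg (eval x) (U_eq ℂ (j : ℤ))
  simp only [eval_sub, eval_mul, eval_X, eval_ofNat] at h1 h2
  simp only [chebyshevSeq, show ((j + 1 : ℕ) : ℤ) - 1 = j by omega,
    show ((j + 1 : ℕ) : ℤ) - 2 = j - 1 by omega, show ((j + 2 : ℕ) : ℤ) - 1 = j + 1 by omega,
    show ((j + 2 : ℕ) : ℤ) - 2 = j by omega]
  linear_combination (-t ^ j * ((U ℂ (j - 1)).eval x - t * (U ℂ (j - 2)).eval x)) * hγ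
    + t ^ (j + 1) * ((U ℂ j).eval x - t * (U ℂ (j - 1)).eval x) * hμ
    + β * t ^ (j + 2) * h1 - β * t ^ (j + 3) * h2

theorem chebyshevSeq_succ_sub (t x : ℂ) (n : ℕ) :
    chebyshevSeq t x (n + 1) - chebyshevSeq t x n =
      t ^ n * (2 * t * x - 1 - t ^ 2) * (U ℂ ((n : ℤ) - 1)).eval x := by
  have h := congrArg (eval x) (U_eq ℂ (n : ℤ))
  simp only [eval_sub, eval_mul, eval_X, eval_ofNat] at h
  simp only [chebyshevSeq, show ((n + 1 : ℕ) : ℤ) - 1 = n by omega,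
    show ((n + 1 : ℕ) : ℤ) - 2 = n - 1 by omega]
  linear_combination t ^ (n + 1) * h

theorem triRefl_isUpperTriangular (n : ℕ) (α β : ℂ) : (triRefl n α β 0).IsUpperTriangular := by
  intro i j hij
  have : (j : ℕ) < i := hij
  simp only [triRefl, of_apply]
  split_ifs <;> first | rfl | omega

theorem triRefl_isLowerTriangular (n : ℕ) (α γ : ℂ) : (triRefl n α 0 γ).IsLowerTriangular := by
  intro i j hij
  have : (i : ℕ) < j := hij
  simp only [triRefl, of_apply]
  split_ifs <;> first | rfl | omega

theorem spectrum_triRefl_of_mul_eq_zero {n : ℕ} (hn : 2 ≤ n) {α β γ : ℂ} (h : β * γ = 0) :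
    spectrum ℂ (triRefl n α β γ) = {α + β + γ, α} := by
  have hfirst : (triRefl n α β γ).diag ⟨0, by omega⟩ = α + γ := by
    simp [triRefl, show (0 : ℕ) ≠ n - 1 by omega]
  have hlast : (triRefl n α β γ).diag ⟨n - 1, by omega⟩ = α + β := by
    simp [triRefl, show n - 1 ≠ 0 by omega]
  have hdiag : Set.range (triRefl n α β γ).diag = {α + β + γ, α} := by
    apply subset_antisymm
    · rintro _ ⟨i, rfl⟩
      rcases mul_eq_zero.mp h with rfl | rfl <;> simp [triRefl] <;> tauto
    · rcases mul_eq_zero.mp h with rfl | rfl <;> simp only [add_zero] at hfirst hlast ⊢ <;>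
        rintro _ (rfl | rfl)
      exacts [⟨_, hfirst⟩, ⟨_, hlast⟩, ⟨_, hlast⟩, ⟨_, hfirst⟩]
  rcases mul_eq_zero.mp h with rfl | rfl
  · rw [spectrum_eq_range_diag_of_isLowerTriangular (triRefl_isLowerTriangular n α γ), hdiag]
  · rw [spectrum_eq_range_diag_of_isUpperTriangular (triRefl_isUpperTriangular n α β), hdiag]

theorem triRefl_mulVec_apply {n : ℕ} (α β γ : ℂ) {w : ℕ → ℂ} (h0 : w 0 = w 1)
    (hn : w (n + 1) = w n) (i : Fin n) :
    (triRefl n α β γ *ᵥ fun j => w (j + 1)) i = γ * w i + α * w (i + 1) + β * w (i + 2) := by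
  obtain ⟨k, hk⟩ := i
  set d := α + (if k = 0 then γ else 0) + (if k = n - 1 then β else 0)
  have hentry (j : ℕ) : (if k = j then d else if k + 1 = j then β else if j + 1 = k then γ else 0) =
      (if j = k then d else 0) + (if j = k + 1 then β else 0) +
        (if j = k - 1 then (if k = 0 then 0 else γ) else 0) := by
    split_ifs <;> first | omega | ring
  simp only [mulVec, dotProduct, triRefl, of_apply]
  rw [Fin.sum_univ_eq_sum_range (fun j => (if k = j then d else if k + 1 = j then β
      else if j + 1 = k then γ else 0) * w (j + 1))]
  simp only [hentry, add_mul, Finset.sum_add_distrib, ite_mul, zero_mul, Finset.sum_ite_eq',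
    Finset.mem_range, d, hk, if_true]
  rcases k with _ | k <;> rcases eq_or_lt_of_le (Nat.succ_le_of_lt hk) with rfl | hlt
  · simp
    linear_combination -γ * h0 - β * hn
  · simp [show 0 ≠ n - 1 by omega, hlt]
    linear_combination -γ * h0
  · simp
    linear_combination -β * hn
  · simp [show k + 1 ≠ n - 1 by omega, hlt, show k < n by omega]
    ring

def IsTriReflEigenseq (n : ℕ) (α β γ μ : ℂ) (w : ℕ → ℂ) : Prop :=
  w 0 = w 1 ∧ w (n + 1) = w n ∧
    ∀ j < n, γ * w j + α * w (j + 1) + β * w (j + 2) = μ * w (j + 1)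

theorem mem_spectrum_triRefl_iff {n : ℕ} {α β γ μ : ℂ} :
    μ ∈ spectrum ℂ (triRefl n α β γ) ↔
      ∃ w, IsTriReflEigenseq n α β γ μ w ∧ ∃ j < n, w (j + 1) ≠ 0 := by
  rw [← spectrum_toLin', ← Module.End.hasEigenvalue_iff_mem_spectrum]
  constructor
  · intro h
    obtain ⟨v, hv⟩ := h.exists_hasEigenvector
    rw [Module.End.hasEigenvector_iff, Module.End.mem_eigenspace_iff, toLin'_apply] at hv
    obtain ⟨⟨j, hj⟩, hvj⟩ := Function.ne_iff.mp hv.2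
    let w : ℕ → ℂ := fun k => v ⟨min (k - 1) (n - 1), by omega⟩
    have hwv : (fun i : Fin n => w (i + 1)) = v := by
      funext i; simp only [w]; congr; simp; omega
    have h0 : w 0 = w 1 := rfl
    have hn : w (n + 1) = w n := by simp only [w]; congr 2; omega
    refine ⟨w, ⟨h0, hn, fun i hi => ?_⟩, j, hj, by rwa [← hwv] at hvj⟩
    have := congr_fun hv.1 ⟨i, hi⟩
    rw [← hwv, triRefl_mulVec_apply α β γ h0 hn] at this
    simpa using this
  · rintro ⟨w, ⟨h0, hn, hrec⟩, j, hj, hwj⟩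
    refine Module.End.hasEigenvalue_of_hasEigenvector (x := fun i : Fin n => w (i + 1)) ?_
    rw [Module.End.hasEigenvector_iff, Module.End.mem_eigenspace_iff, toLin'_apply]
    refine ⟨funext fun i => ?_, Function.ne_iff.mpr ⟨⟨j, hj⟩, hwj⟩⟩
    rw [triRefl_mulVec_apply α β γ h0 hn, hrec i i.isLt]
    rfl

theorem mem_spectrum_triRefl_iff_eval_U {n : ℕ} (hn : 0 < n) {α β γ s μ : ℂ}
    (hs : s ^ 2 = β * γ) (hs0 : s ≠ 0) :
    μ ∈ spectrum ℂ (triRefl n α β γ) ↔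
      (μ - (α + β + γ)) * (U ℂ ((n : ℤ) - 1)).eval ((μ - α) / (2 * s)) = 0 := by
  have hβ : β ≠ 0 := by rintro rfl; simp_all
  set t := s / β
  set x := (μ - α) / (2 * s)
  have ht : t ≠ 0 := div_ne_zero hs0 hβ
  have hγ : β * t ^ 2 = γ := by
    simp only [t]; field_simp; linear_combination hs
  have hμ : 2 * β * t * x = μ - α := by
    simp only [t, x]; field_simp
  have hrec := chebyshevSeq_recurrence hγ hμ
  have hboundary : chebyshevSeq t x (n + 1) = chebyshevSeq t x n ↔
      (μ - (α + β + γ)) * (U ℂ ((n : ℤ) - 1)).eval x = 0 := by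
    have hfactor : t ^ n * (2 * t * x - 1 - t ^ 2) = t ^ n / β * (μ - (α + β + γ)) := by
      rw [div_mul_eq_mul_div, eq_div_iff hβ]
      linear_combination t ^ n * hμ - t ^ n * hγ
    rw [← sub_eq_zero, chebyshevSeq_succ_sub, hfactor, mul_assoc,
      mul_eq_zero, or_iff_right (div_ne_zero (pow_ne_zero _ ht) hβ)]
  rw [mem_spectrum_triRefl_iff, ← hboundary]
  constructor
  · rintro ⟨w, ⟨h0, hn', hw⟩, j, hj, hwj⟩
    have heq := eq_of_recurrence hβ (w' := fun j => w 0 / t * chebyshevSeq t x j) hw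
      (fun j _ => by linear_combination w 0 / t * hrec j)
      (by simp [chebyshevSeq_zero, ht]) (by simp [chebyshevSeq_one, ht, h0])
    have hw0 : w 0 / t ≠ 0 := by
      refine div_ne_zero (fun h => hwj ?_) ht
      rw [heq (j + 1) (by omega), h, zero_div, zero_mul]
    rw [heq (n + 1) le_rfl, heq n (by omega)] at hn'
    exact mul_left_cancel₀ hw0 hn'
  · intro hC
    exact ⟨chebyshevSeq t x, ⟨by rw [chebyshevSeq_zero, chebyshevSeq_one], hC, fun j _ => hrec j⟩,
      0, hn, by rwa [chebyshevSeq_one]⟩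

/-- The eigenvalues of the perturbed tridiagonal Toeplitz matrix are exactly
`α + 2√(βγ) cos(kπ/n)`, `k = 1, …, n-1`, together with `α + β + γ`. -/
theorem stmt2 (n : ℕ) (hn : 2 ≤ n) (α β γ s : ℂ) (hs : s ^ 2 = β * γ) :
    spectrum ℂ (triRefl n α β γ) =
      insert (α + β + γ)
        (Set.range (fun k : Fin (n - 1) =>
          α + 2 * s * Complex.cos ((((k : ℕ) + 1 : ℕ) : ℂ) * (Real.pi : ℂ) / (n : ℂ)))) := by
  by_cases hs0 : s = 0
  · have : Nonempty (Fin (n - 1)) := ⟨⟨0, by omega⟩⟩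
    rw [spectrum_triRefl_of_mul_eq_zero hn (by rw [← hs, hs0]; ring), hs0]
    simp
  · ext μ
    rw [mem_spectrum_triRefl_iff_eval_U (by omega) hs hs0, mul_eq_zero, sub_eq_zero,
      eval_U_complex_eq_zero_iff (by omega), Set.mem_insert_iff, Set.mem_range]
    refine or_congr Iff.rfl (exists_congr fun k => ?_)
    rw [div_eq_iff (mul_ne_zero two_ne_zero hs0)]
    constructor <;> intro h <;> linear_combination -h
end

section
/- The characteristic polynomial of the matrix A from the perturbed tridiagonal Toeplitz family factors as det(A − λI_n) = (α + β + γ − λ)·det(Ã − λI_{n−1}), where Ã is the (n−1)×(n−1) tridiagonal Toeplitz matrix tridiag(β, α, γ). -/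
open Matrix

/-- The `n × n` tridiagonal Toeplitz matrix `tridiag(β, α, γ)`. -/
def triToep (n : ℕ) (α β γ : ℂ) : Matrix (Fin n) (Fin n) ℂ :=
  Matrix.of fun i j =>
    if (i : ℕ) = (j : ℕ) then α
    else if (i : ℕ) + 1 = (j : ℕ) then β
    else if (j : ℕ) + 1 = (i : ℕ) then γ
    else 0

/-! The determinant is affine in each diagonal entry, with slope the complementary principal
minor. Peeling off the two corner perturbations therefore gives, with `t k` the determinant of
the `k × k` Toeplitz matrix `tridiag(β, α - λ, γ)`,
`det (A - λ) = t n + (β + γ) t (n - 1) + β γ t (n - 2)`,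
and the three-term recurrence `t n = (α - λ) t (n - 1) - β γ t (n - 2)` collapses this to
`(α + β + γ - λ) t (n - 1)`. -/

namespace Matrix

variable {R : Type*} [CommRing R]

theorem det_add_single_self {k : ℕ} (M : Matrix (Fin (k + 1)) (Fin (k + 1)) R)
    (i : Fin (k + 1)) (x : R) :
    (M + single i i x).det = M.det + x * (M.submatrix i.succAbove i.succAbove).det := by
  have hminor (j : Fin (k + 1)) :
      (M + single i i x).submatrix i.succAbove j.succAbove =
        M.submatrix i.succAbove j.succAbove := by
    ext r s
    simp
  rw [det_succ_row _ i, det_succ_row M i]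
  simp only [hminor, add_apply, mul_add, add_mul, Finset.sum_add_distrib, single_apply]
  simp [← two_mul, pow_mul]

end Matrix

section

variable (a b c : ℂ)

theorem triToep_apply {n : ℕ} (i j : Fin n) :
    triToep n a b c i j =
      if (i : ℕ) = j then a
      else if (i : ℕ) + 1 = j then b
      else if (j : ℕ) + 1 = i then c
      else 0 :=
  rfl

theorem triToep_sub_smul_one (n : ℕ) (lam : ℂ) :
    triToep n a b c - lam • (1 : Matrix (Fin n) (Fin n) ℂ) = triToep n (a - lam) b c := by
  ext i j
  simp only [Matrix.sub_apply, Matrix.smul_apply, Matrix.one_apply, smul_eq_mul, triToep,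
    Matrix.of_apply, Fin.ext_iff]
  split_ifs <;> ring

theorem triRefl_sub_smul_one (n : ℕ) (lam : ℂ) :
    triRefl n a b c - lam • (1 : Matrix (Fin n) (Fin n) ℂ) = triRefl n (a - lam) b c := by
  ext i j
  simp only [Matrix.sub_apply, Matrix.smul_apply, Matrix.one_apply, smul_eq_mul, triRefl,
    Matrix.of_apply, Fin.ext_iff]
  split_ifs <;> ring

theorem triRefl_eq_triToep_add (k : ℕ) :
    triRefl (k + 1) a b c =
      triToep (k + 1) a b c + single 0 0 c + single (Fin.last k) (Fin.last k) b := by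
  ext i j
  simp only [triRefl, triToep, Matrix.add_apply, single_apply, Matrix.of_apply, Fin.ext_iff,
    Fin.val_zero, Fin.val_last]
  split_ifs <;> first | ring1 | (exfalso; omega)

theorem triToep_submatrix_succ (k : ℕ) :
    (triToep (k + 1) a b c).submatrix Fin.succ Fin.succ = triToep k a b c := by
  ext i j
  simp [triToep_apply]

theorem triToep_add_single_zero_submatrix_castSucc (k : ℕ) (x : ℂ) :
    (triToep (k + 2) a b c + single 0 0 x).submatrix Fin.castSucc Fin.castSucc =
      triToep (k + 1) a b c + single 0 0 x := by
  ext i j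
  simp [triToep_apply, single_apply, Fin.ext_iff]

theorem det_triToep_add_single_zero (k : ℕ) (x : ℂ) :
    (triToep (k + 1) a b c + single 0 0 x).det =
      (triToep (k + 1) a b c).det + x * (triToep k a b c).det := by
  rw [det_add_single_self, Fin.succAbove_zero, triToep_submatrix_succ]

theorem det_triToep_succ_succ (k : ℕ) :
    (triToep (k + 2) a b c).det =
      a * (triToep (k + 1) a b c).det - b * c * (triToep k a b c).det := by
  -- Expand along the first row `(a, b, 0, …)`; the minor of `b` has first column `(c, 0, …)`.
  have hminor : ((triToep (k + 2) a b c).submatrix Fin.succ (Fin.succAbove 1)).det =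
      c * (triToep k a b c).det := by
    rw [det_succ_column_zero, Fin.sum_univ_succ, Finset.sum_eq_zero]
    · have : ((triToep (k + 2) a b c).submatrix Fin.succ (Fin.succAbove 1)).submatrix
          Fin.succ Fin.succ = triToep k a b c := by
        ext i j
        simp [triToep_apply]
      simp [this, triToep_apply]
    · intro i _
      simp [triToep_apply]
  rw [det_succ_row_zero, Fin.sum_univ_succ, Fin.sum_univ_succ, Finset.sum_eq_zero]
  · simp only [Nat.succ_eq_add_one, Fin.coe_ofNat_eq_mod, Nat.zero_mod, pow_zero, triToep_apply,
      ↓reduceIte, one_mul, Fin.succAbove_zero, triToep_submatrix_succ, Fin.succ_zero_eq_one,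
      Nat.one_mod, pow_one, zero_ne_one, zero_add, neg_mul, hminor, add_zero]
    ring
  · intro j _
    simp [triToep_apply]

end

/-- `det(A − λIₙ) = (α + β + γ − λ) · det(Ã − λI_{n−1})` where `A` is the perturbed
tridiagonal Toeplitz matrix and `Ã = tridiag(β, α, γ)` of size `n − 1`. -/
theorem stmt3 (n : ℕ) (hn : 2 ≤ n) (α β γ : ℂ) (lam : ℂ) :
    (triRefl n α β γ - lam • (1 : Matrix (Fin n) (Fin n) ℂ)).det =
      (α + β + γ - lam) *
        (triToep (n - 1) α β γ - lam • (1 : Matrix (Fin (n - 1)) (Fin (n - 1)) ℂ)).det := by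
  obtain ⟨k, rfl⟩ : ∃ k, n = k + 2 := ⟨n - 2, by omega⟩
  rw [triRefl_sub_smul_one, triToep_sub_smul_one, triRefl_eq_triToep_add, det_add_single_self,
    Fin.succAbove_last, triToep_add_single_zero_submatrix_castSucc, det_triToep_add_single_zero,
    det_triToep_add_single_zero, det_triToep_succ_succ, show k + 2 - 1 = k + 1 by omega]
  ring
end

section
/- For a 3×3 filter F, the convolution equation F∗X = B with zero boundary condition is equivalent to the generalized Sylvester equation F₁·X·L_n + F₂·X + F₃·X·U_n = B, where F_i = tridiag(f_{1i}, f_{2i}, f_{3i}) ∈ ℝ^{m×m} and U_n, L_n are the upper and lower shift matrices. -/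
open Matrix

/-- Upper shift matrix: 1's on the superdiagonal. -/
def Umat (k : ℕ) : Matrix (Fin k) (Fin k) ℝ :=
  Matrix.of fun i j => if (i : ℕ) + 1 = (j : ℕ) then 1 else 0

/-- Lower shift matrix: 1's on the subdiagonal. -/
def Lmat (k : ℕ) : Matrix (Fin k) (Fin k) ℝ :=
  Matrix.of fun i j => if (j : ℕ) + 1 = (i : ℕ) then 1 else 0

/-- Tridiagonal Toeplitz matrix `tridiag(f1, f2, f3)`: superdiagonal `f1`, diagonal `f2`,
subdiagonal `f3`. -/
def triMat (m : ℕ) (f1 f2 f3 : ℝ) : Matrix (Fin m) (Fin m) ℝ :=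
  Matrix.of fun i j =>
    if (i : ℕ) = (j : ℕ) then f2
    else if (i : ℕ) + 1 = (j : ℕ) then f1
    else if (j : ℕ) + 1 = (i : ℕ) then f3
    else 0

/-!
Extend `X` by zeros to an array indexed by `ℕ × ℕ`, shifted by one so that the interior entry
`X i j` sits at `(i + 1, j + 1)`; under the boundary conditions this is exactly the array `x`.
Left multiplication by `Uₘ`, `Lₘ` and right multiplication by `Lₙ`, `Uₙ` shift the padded array by
one row or column, and `tridiag(a, b, c) = a Uₘ + b I + c Lₘ`. Hence each entry of
`F₁ X Lₙ + F₂ X + F₃ X Uₙ` is the 3 × 3 stencil of `F` applied to the padded array.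
-/

section ZeroPad

variable {α : Type*} [Zero α] {m n : ℕ}

def zeroPad (A : Matrix (Fin m) (Fin n) α) (p q : ℕ) : α :=
  if h : 0 < p ∧ p ≤ m ∧ 0 < q ∧ q ≤ n then A ⟨p - 1, by omega⟩ ⟨q - 1, by omega⟩ else 0

@[simp]
lemma zeroPad_succ_succ (A : Matrix (Fin m) (Fin n) α) (i : Fin m) (j : Fin n) :
    zeroPad A (i + 1) (j + 1) = A i j := by
  simp [zeroPad]

lemma zeroPad_eq_zero (A : Matrix (Fin m) (Fin n) α) {p q : ℕ}
    (h : ¬(0 < p ∧ p ≤ m ∧ 0 < q ∧ q ≤ n)) : zeroPad A p q = 0 :=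
  dif_neg h

lemma zeroPad_transpose (A : Matrix (Fin m) (Fin n) α) (p q : ℕ) :
    zeroPad Aᵀ p q = zeroPad A q p := by
  unfold zeroPad
  split_ifs <;> first | rfl | (exfalso; omega)

end ZeroPad

lemma Fin.sum_ite_val_eq {M : Type*} [AddCommMonoid M] {m : ℕ} (t : ℕ) (g : ℕ → M) :
    ∑ k : Fin m, (if (k : ℕ) = t then g k else 0) = if t < m then g t else 0 := by
  rw [Fin.sum_univ_eq_sum_range (fun k => if k = t then g k else 0), Finset.sum_ite_eq']
  simp

section ShiftMatrices

variable {m n : ℕ}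

lemma sum_ite_val_eq_zeroPad (A : Matrix (Fin m) (Fin n) ℝ) (t : ℕ) (j : Fin n) :
    ∑ k : Fin m, (if (k : ℕ) = t then A k j else 0) =
      if t < m then zeroPad A (t + 1) (j + 1) else 0 := by
  simp only [← zeroPad_succ_succ A _ j]
  exact Fin.sum_ite_val_eq t (fun k => zeroPad A (k + 1) (j + 1))

lemma Umat_mul_apply (A : Matrix (Fin m) (Fin n) ℝ) (i : Fin m) (j : Fin n) :
    (Umat m * A) i j = zeroPad A (i + 2) (j + 1) := by
  simp only [Matrix.mul_apply, Umat, Matrix.of_apply, ite_mul, one_mul, zero_mul,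
    eq_comm (a := (i : ℕ) + 1)]
  rw [sum_ite_val_eq_zeroPad]
  split_ifs with h
  · rfl
  · exact (zeroPad_eq_zero A (by omega)).symm

lemma Lmat_mul_apply (A : Matrix (Fin m) (Fin n) ℝ) (i : Fin m) (j : Fin n) :
    (Lmat m * A) i j = zeroPad A i (j + 1) := by
  simp only [Matrix.mul_apply, Lmat, Matrix.of_apply, ite_mul, one_mul, zero_mul]
  by_cases hi : (i : ℕ) = 0
  · rw [hi, zeroPad_eq_zero A (by omega)]
    exact Finset.sum_eq_zero fun k _ => if_neg (by omega)
  · have hk : ∀ k : Fin m, (k : ℕ) + 1 = i ↔ (k : ℕ) = i - 1 := fun k => by omega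
    simp only [hk]
    rw [sum_ite_val_eq_zeroPad, if_pos (by omega), Nat.sub_add_cancel (by omega)]

lemma Lmat_transpose (k : ℕ) : (Lmat k)ᵀ = Umat k := by
  ext i j
  simp [Lmat, Umat]

lemma Umat_transpose (k : ℕ) : (Umat k)ᵀ = Lmat k := by
  rw [← Lmat_transpose, Matrix.transpose_transpose]

lemma mul_Lmat_apply (A : Matrix (Fin m) (Fin n) ℝ) (i : Fin m) (j : Fin n) :
    (A * Lmat n) i j = zeroPad A (i + 1) (j + 2) := by
  rw [← Matrix.transpose_apply (A * Lmat n), Matrix.transpose_mul, Lmat_transpose,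
    Umat_mul_apply, zeroPad_transpose]

lemma mul_Umat_apply (A : Matrix (Fin m) (Fin n) ℝ) (i : Fin m) (j : Fin n) :
    (A * Umat n) i j = zeroPad A (i + 1) j := by
  rw [← Matrix.transpose_apply (A * Umat n), Matrix.transpose_mul, Umat_transpose,
    Lmat_mul_apply, zeroPad_transpose]

lemma zeroPad_mul_Lmat (A : Matrix (Fin m) (Fin n) ℝ) (p q : ℕ) :
    zeroPad (A * Lmat n) p (q + 1) = zeroPad A p (q + 2) := by
  by_cases h : 0 < p ∧ p ≤ m ∧ q < n
  · obtain ⟨i, rfl⟩ : ∃ i : Fin m, (i : ℕ) + 1 = p := ⟨⟨p - 1, by omega⟩, by simp; omega⟩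
    exact (zeroPad_succ_succ _ i ⟨q, h.2.2⟩).trans (mul_Lmat_apply A i ⟨q, h.2.2⟩)
  · rw [zeroPad_eq_zero _ (by omega), zeroPad_eq_zero _ (by omega)]

lemma zeroPad_mul_Umat (A : Matrix (Fin m) (Fin n) ℝ) (p : ℕ) (j : Fin n) :
    zeroPad (A * Umat n) p (j + 1) = zeroPad A p j := by
  by_cases h : 0 < p ∧ p ≤ m
  · obtain ⟨i, rfl⟩ : ∃ i : Fin m, (i : ℕ) + 1 = p := ⟨⟨p - 1, by omega⟩, by simp; omega⟩
    exact (zeroPad_succ_succ _ i j).trans (mul_Umat_apply A i j)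
  · rw [zeroPad_eq_zero _ (by omega), zeroPad_eq_zero _ (by omega)]

lemma triMat_eq (k : ℕ) (a b c : ℝ) : triMat k a b c = a • Umat k + b • 1 + c • Lmat k := by
  ext i j
  simp only [triMat, Umat, Lmat, Matrix.add_apply, Matrix.smul_apply, Matrix.one_apply,
    Matrix.of_apply, Fin.ext_iff, smul_eq_mul]
  split_ifs <;> first | (exfalso; omega) | ring

lemma triMat_mul_apply (a b c : ℝ) (A : Matrix (Fin m) (Fin n) ℝ) (i : Fin m) (j : Fin n) :
    (triMat m a b c * A) i j =
      a * zeroPad A (i + 2) (j + 1) + b * zeroPad A (i + 1) (j + 1) + c * zeroPad A i (j + 1) := by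
  rw [triMat_eq, Matrix.add_mul, Matrix.add_mul, Matrix.add_apply, Matrix.add_apply,
    Matrix.smul_mul, Matrix.smul_mul, Matrix.smul_mul, Matrix.one_mul]
  simp only [Matrix.smul_apply, smul_eq_mul, Umat_mul_apply, Lmat_mul_apply, zeroPad_succ_succ]

lemma sylvester_apply_eq_sum_zeroPad (F : Matrix (Fin 3) (Fin 3) ℝ)
    (X : Matrix (Fin m) (Fin n) ℝ) (i : Fin m) (j : Fin n) :
    (triMat m (F 0 0) (F 1 0) (F 2 0) * X * Lmat n
      + triMat m (F 0 1) (F 1 1) (F 2 1) * X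
      + triMat m (F 0 2) (F 1 2) (F 2 2) * X * Umat n) i j =
    ∑ l₁ : Fin 3, ∑ l₂ : Fin 3, F l₁ l₂ * zeroPad X (i + 2 - l₁) (j + 2 - l₂) := by
  have two_sub_one (k : ℕ) : k + 2 - 1 = k + 1 := rfl
  simp only [Matrix.add_apply, Matrix.mul_assoc, triMat_mul_apply, zeroPad_mul_Lmat,
    zeroPad_mul_Umat, Fin.sum_univ_three, Fin.val_zero, Fin.val_one, Fin.val_two,
    Nat.sub_zero, two_sub_one, Nat.add_sub_cancel]
  ring

end ShiftMatrices

lemma eq_zeroPad_of_boundary {α : Type*} [Zero α] {m n : ℕ} {X : Matrix (Fin m) (Fin n) α}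
    {x : Fin (m + 2) → Fin (n + 2) → α}
    (hint : ∀ (i : Fin m) (j : Fin n), x i.succ.castSucc j.succ.castSucc = X i j)
    (htop : ∀ j, x 0 j = 0) (hbot : ∀ j, x (Fin.last (m + 1)) j = 0)
    (hleft : ∀ i, x i 0 = 0) (hright : ∀ i, x i (Fin.last (n + 1)) = 0)
    (p : Fin (m + 2)) (q : Fin (n + 2)) : x p q = zeroPad X p q := by
  induction p using Fin.lastCases with
  | last => rw [hbot, zeroPad_eq_zero _ (by simp)]
  | cast p =>
    induction p using Fin.cases with
    | zero => rw [Fin.castSucc_zero, htop, zeroPad_eq_zero _ (by simp)]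
    | succ i =>
      induction q using Fin.lastCases with
      | last => rw [hright, zeroPad_eq_zero _ (by simp)]
      | cast q =>
        induction q using Fin.cases with
        | zero => rw [Fin.castSucc_zero, hleft, zeroPad_eq_zero _ (by simp)]
        | succ j => simpa using hint i j

/-- The convolution equation `F ∗ X = B` with the zero boundary condition is equivalent to the
generalized Sylvester equation `F₁ X Lₙ + F₂ X + F₃ X Uₙ = B`.  Here `x : Fin (m+2) → Fin (n+2) → ℝ`
is the padded array (`x i j` is the paper's `x_{ij}` for `0 ≤ i ≤ m+1`, `0 ≤ j ≤ n+1`),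
determined by `X` in the interior and by the zero boundary condition on the boundary. -/
theorem stmt4 (m n : ℕ)
    (F : Matrix (Fin 3) (Fin 3) ℝ) (X B : Matrix (Fin m) (Fin n) ℝ)
    (x : Fin (m + 2) → Fin (n + 2) → ℝ)
    (hint : ∀ (i : Fin m) (j : Fin n), x i.succ.castSucc j.succ.castSucc = X i j)
    (htop : ∀ j, x 0 j = 0) (hbot : ∀ j, x (Fin.last (m + 1)) j = 0)
    (hleft : ∀ i, x i 0 = 0) (hright : ∀ i, x i (Fin.last (n + 1)) = 0) :
    (∀ (i : Fin m) (j : Fin n),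
        (∑ l₁ : Fin 3, ∑ l₂ : Fin 3, F l₁ l₂ *
          x ⟨(i : ℕ) + 2 - (l₁ : ℕ), by have h1 := i.isLt; have h2 := l₁.isLt; omega⟩
            ⟨(j : ℕ) + 2 - (l₂ : ℕ), by have h1 := j.isLt; have h2 := l₂.isLt; omega⟩) = B i j)
      ↔
    triMat m (F 0 0) (F 1 0) (F 2 0) * X * Lmat n
      + triMat m (F 0 1) (F 1 1) (F 2 1) * X
      + triMat m (F 0 2) (F 1 2) (F 2 2) * X * Umat n = B := by
  simp only [eq_zeroPad_of_boundary hint htop hbot hleft hright, ← Matrix.ext_iff,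
    sylvester_apply_eq_sum_zeroPad]
end

section
/- The n×n matrix T_n = tridiag(1,1,1) (diagonal, superdiagonal, and subdiagonal entries all 1) is nonsingular if and only if n is not of the form 3l − 1 for any natural number l ≥ 1. -/
/-!
Expanding `det T_{n+2}` along the first row, and the second minor along its first column, gives
`D_{n+2} = D_{n+1} - D_n` for `D_n = det T_n`. Hence `D_{n+3} = -D_n`, and since
`D_0 = D_1 = 1`, `D_2 = 0`, the determinant vanishes exactly when `n ≡ 2 (mod 3)`.
-/

open Matrix

/-- `T_n = tridiag(1,1,1)`: the `n × n` matrix with diagonal, superdiagonal and subdiagonal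
entries all `1`. -/
def Tmat (n : ℕ) : Matrix (Fin n) (Fin n) ℝ :=
  Matrix.of fun i j =>
    if (i : ℕ) = (j : ℕ) ∨ (i : ℕ) + 1 = (j : ℕ) ∨ (j : ℕ) + 1 = (i : ℕ) then 1 else 0

namespace Matrix

variable {R : Type*}

def tridiagToeplitz [Zero R] (a b c : R) (n : ℕ) : Matrix (Fin n) (Fin n) R :=
  of fun i j =>
    if (i : ℕ) = j then a else if (i : ℕ) = j + 1 then b else if (i : ℕ) + 1 = j then c else 0

section
variable [Zero R] (a b c : R) (n : ℕ)

@[simp]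
theorem tridiagToeplitz_apply (i j : Fin n) :
    tridiagToeplitz a b c n i j =
      if (i : ℕ) = j then a else if (i : ℕ) = j + 1 then b else if (i : ℕ) + 1 = j then c else 0 :=
  rfl

theorem tridiagToeplitz_submatrix_succ_succ :
    (tridiagToeplitz a b c (n + 1)).submatrix Fin.succ Fin.succ = tridiagToeplitz a b c n := by
  ext i j
  simp only [submatrix_apply, tridiagToeplitz_apply, Fin.val_succ, add_left_inj]

theorem tridiagToeplitz_submatrix_succ_succAbove_one_succ :
    ((tridiagToeplitz a b c (n + 2)).submatrix Fin.succ (Fin.succAbove 1)).submatrix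
      Fin.succ Fin.succ = tridiagToeplitz a b c n := by
  ext i j
  have hj : ((1 : Fin (n + 2)).succAbove j.succ : ℕ) = j + 2 := by
    rw [Fin.succAbove_of_le_castSucc _ _ (by simp [Fin.le_def])]
    simp
  simp only [submatrix_apply, tridiagToeplitz_apply, Fin.val_succ, hj]
  split_ifs <;> first | rfl | omega

end

theorem det_tridiagToeplitz_add_two [CommRing R] (a b c : R) (n : ℕ) :
    (tridiagToeplitz a b c (n + 2)).det =
      a * (tridiagToeplitz a b c (n + 1)).det - b * c * (tridiagToeplitz a b c n).det := by
  set T := tridiagToeplitz a b c (n + 2)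
  have hminor : (T.submatrix Fin.succ (Fin.succAbove 1)).det = b * (tridiagToeplitz a b c n).det := by
    have hcol : ∀ i : Fin n, T.submatrix Fin.succ (Fin.succAbove 1) i.succ 0 = 0 := fun i => by
      simp [T]
    have hcorner : T.submatrix Fin.succ (Fin.succAbove 1) 0 0 = b := by simp [T]
    rw [det_succ_column_zero, Fin.sum_univ_succ, Fin.succAbove_zero,
      tridiagToeplitz_submatrix_succ_succAbove_one_succ]
    simp only [hcol, mul_zero, zero_mul, Finset.sum_const_zero, add_zero]
    rw [hcorner, Fin.val_zero, pow_zero, one_mul]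
  have h00 : T 0 0 = a := by simp [T]
  have h01 : T 0 1 = c := by simp [T]
  have hrow : ∀ j : Fin n, T 0 j.succ.succ = 0 := fun j => by simp [T]
  rw [det_succ_row_zero, Fin.sum_univ_succ, Fin.sum_univ_succ, Fin.succAbove_zero,
    Fin.succ_zero_eq_one, tridiagToeplitz_submatrix_succ_succ, hminor]
  simp only [hrow, mul_zero, zero_mul, Finset.sum_const_zero, add_zero]
  rw [h00, h01, Fin.val_zero, Fin.val_one, pow_zero, pow_one]
  ring

end Matrix

theorem Tmat_eq_tridiagToeplitz (n : ℕ) : Tmat n = tridiagToeplitz 1 1 1 n := by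
  ext i j
  simp only [Tmat, of_apply, tridiagToeplitz_apply]
  split_ifs <;> first | rfl | omega

theorem det_Tmat_add_two (n : ℕ) : (Tmat (n + 2)).det = (Tmat (n + 1)).det - (Tmat n).det := by
  simp only [Tmat_eq_tridiagToeplitz, det_tridiagToeplitz_add_two, one_mul]

theorem det_Tmat_add_three (n : ℕ) : (Tmat (n + 3)).det = -(Tmat n).det := by
  rw [det_Tmat_add_two, det_Tmat_add_two]
  ring

theorem det_Tmat_eq_zero_iff : ∀ n, (Tmat n).det = 0 ↔ n % 3 = 2
  | 0 => by simp
  | 1 => by simp [Tmat]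
  | 2 => by simp [Tmat, det_fin_two]
  | n + 3 => by
    rw [det_Tmat_add_three, neg_eq_zero, det_Tmat_eq_zero_iff n]
    omega

theorem stmt7_general (n : ℕ) :
    (Tmat n).det ≠ 0 ↔ ¬ ∃ l : ℕ, 0 < l ∧ n = 3 * l - 1 := by
  rw [ne_eq, det_Tmat_eq_zero_iff]
  refine not_congr ⟨fun h => ⟨(n + 1) / 3, by omega, by omega⟩, ?_⟩
  rintro ⟨l, hl, rfl⟩
  omega

/-- `T_n` is nonsingular iff `n` is not of the form `3l − 1` for some `l ≥ 1`. -/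
theorem stmt7 (n : ℕ) (hn : 0 < n) :
    (Tmat n).det ≠ 0 ↔ ¬ ∃ l : ℕ, 0 < l ∧ n = 3 * l - 1 :=
  stmt7_general n
end

section
/- The convolution equation with the box blur filter F = (1/9)·J (J the all-ones 3×3 matrix) under zero boundary condition has a unique solution X ∈ ℝ^{m×n} for every B ∈ ℝ^{m×n} if and only if neither m nor n is congruent to 2 mod 3 (i.e., m, n ∉ {3l−1 : l ∈ ℕ}). -/
/-! With `T = tridiag(1,1,1)`, the box-blur convolution with zero boundary is `X ↦ 9⁻¹ • T_m X T_n`,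
which is bijective iff `T_m` and `T_n` are nonsingular. A kernel vector of `T_m`, padded by zeros to
`w₀, …, w_{m+1}`, satisfies `w_k + w_{k+1} + w_{k+2} = 0` with `w₀ = 0`, hence
`w = w₁ • (0, 1, -1, 0, 1, -1, …)`. The last condition `w_{m+1} = 0` then forces `w₁ = 0` unless
`3 ∣ m + 1`, and when `3 ∣ m + 1` this periodic sequence is a nonzero kernel vector. -/

open Matrix

/-- Zero padding of an `m × n` matrix, in the paper's 1-based indexing:
`padZ X i j = X_{ij}` if `1 ≤ i ≤ m` and `1 ≤ j ≤ n`, and `0` otherwise. -/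
def padZ {m n : ℕ} (X : Matrix (Fin m) (Fin n) ℝ) (i j : ℕ) : ℝ :=
  if h : 1 ≤ i ∧ i ≤ m ∧ 1 ≤ j ∧ j ≤ n then X ⟨i - 1, by omega⟩ ⟨j - 1, by omega⟩ else 0

/-- The convolution `F ∗ X` with the zero boundary condition:
`(F ∗ X)_{ij} = Σ_{l₁=1}^{3} Σ_{l₂=1}^{3} f_{l₁l₂} x_{i−l₁+2, j−l₂+2}`. -/
def convZ {m n : ℕ} (F : Matrix (Fin 3) (Fin 3) ℝ) (X : Matrix (Fin m) (Fin n) ℝ) :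
    Matrix (Fin m) (Fin n) ℝ :=
  Matrix.of fun i j =>
    ∑ l₁ : Fin 3, ∑ l₂ : Fin 3,
      F l₁ l₂ * padZ X ((i : ℕ) + 2 - (l₁ : ℕ)) ((j : ℕ) + 2 - (l₂ : ℕ))

/-- The box blur filter `(1/9)·J`. -/
noncomputable def boxFilter : Matrix (Fin 3) (Fin 3) ℝ := Matrix.of fun _ _ => (1 : ℝ) / 9

theorem Matrix.bijective_mul_mul_iff {K m n : Type*} [Field K] [Fintype m] [Fintype n]
    [DecidableEq m] [DecidableEq n] [Nonempty m] [Nonempty n] (A : Matrix m m K)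
    (B : Matrix n n K) :
    Function.Bijective (fun X : Matrix m n K => A * X * B) ↔ A.det ≠ 0 ∧ B.det ≠ 0 := by
  constructor
  · intro h
    have hker : ∀ X : Matrix m n K, A * X * B = 0 → X = 0 := fun X hX =>
      h.1 (show A * X * B = A * 0 * B by simpa using hX)
    -- kernel vectors `v` of `A` and `w` of `Bᵀ` give the nonzero solutions `v 1ᵀ` and `1 wᵀ`
    constructor
    · intro hA
      obtain ⟨v, hv, hAv⟩ := exists_mulVec_eq_zero_iff.mpr hA
      have := hker (vecMulVec v 1) (by rw [mul_vecMulVec, hAv]; simp)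
      simp [hv] at this
    · intro hB
      obtain ⟨w, hw, hwB⟩ := exists_vecMul_eq_zero_iff.mpr hB
      have := hker (vecMulVec 1 w) (by rw [Matrix.mul_assoc, vecMulVec_mul, hwB]; simp)
      simp [hw] at this
  · rintro ⟨hA, hB⟩
    have hA' := hA.isUnit
    have hB' := hB.isUnit
    rw [Function.bijective_iff_has_inverse]
    refine ⟨fun Y => A⁻¹ * Y * B⁻¹, fun X => ?_, fun Y => ?_⟩
    · dsimp only
      rw [← Matrix.mul_assoc A⁻¹, mul_nonsing_inv_cancel_right B _ hB',
        nonsing_inv_mul_cancel_left A _ hA']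
    · dsimp only
      rw [← Matrix.mul_assoc A, nonsing_inv_mul_cancel_right B _ hB',
        mul_nonsing_inv_cancel_left A _ hA']

-- Zero extension of `v` to `ℕ`, in the 1-based indexing of `padZ`.
def padVec {R : Type*} [Zero R] {m : ℕ} (v : Fin m → R) (k : ℕ) : R :=
  if h : 1 ≤ k ∧ k ≤ m then v ⟨k - 1, by omega⟩ else 0

section padVec

variable {R : Type*} {m : ℕ}

@[simp]
theorem padVec_zero [Zero R] (v : Fin m → R) : padVec v 0 = 0 := by
  simp [padVec]

@[simp]
theorem padVec_length_succ [Zero R] (v : Fin m → R) : padVec v (m + 1) = 0 := by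
  simp [padVec]

@[simp]
theorem padVec_val_succ [Zero R] (v : Fin m → R) (a : Fin m) : padVec v (a + 1) = v a := by
  simp [padVec, a.isLt]

theorem padVec_add [AddZeroClass R] (f g : Fin m → R) (k : ℕ) :
    padVec (fun a => f a + g a) k = padVec f k + padVec g k := by
  unfold padVec; split_ifs <;> simp

theorem padVec_eq_sum [AddCommMonoid R] (v : Fin m → R) (k : ℕ) :
    padVec v k = ∑ a : Fin m, if (a : ℕ) + 1 = k then v a else 0 := by
  unfold padVec
  split_ifs with h
  · rw [Finset.sum_eq_single ⟨k - 1, by omega⟩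
      (fun b _ hb => if_neg fun hb' => hb (by ext; simp only; omega)) (by simp),
      if_pos (by simp only; omega)]
  · exact (Finset.sum_eq_zero fun a _ => if_neg (by omega)).symm

theorem padVec_comp_succ [Zero R] (f : ℕ → R) (hf0 : f 0 = 0) (hfm : f (m + 1) = 0) {k : ℕ}
    (hk : k ≤ m + 1) : padVec (fun a : Fin m => f (a + 1)) k = f k := by
  unfold padVec
  split_ifs with h
  · simp only [Nat.sub_add_cancel h.1]
  · obtain rfl | rfl : k = 0 ∨ k = m + 1 := by omega
    exacts [hf0.symm, hfm.symm]

end padVec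

def tridiagOnes (R : Type*) [Zero R] [One R] (m : ℕ) : Matrix (Fin m) (Fin m) R :=
  of fun i j => if (i : ℕ) ≤ j + 1 ∧ (j : ℕ) ≤ i + 1 then 1 else 0

section tridiagOnes

variable {R : Type*} {m : ℕ}

theorem tridiagOnes_transpose [Zero R] [One R] : (tridiagOnes R m)ᵀ = tridiagOnes R m := by
  ext i j
  simp only [transpose_apply, tridiagOnes, of_apply, and_comm]

theorem tridiagOnes_apply_eq_add [AddMonoidWithOne R] (i a : Fin m) :
    tridiagOnes R m i a = (if (a : ℕ) + 1 = i then 1 else 0)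
      + (if (a : ℕ) + 1 = i + 1 then 1 else 0) + (if (a : ℕ) + 1 = i + 2 then 1 else 0) := by
  simp only [tridiagOnes, of_apply]
  split_ifs <;> first | omega | simp

theorem tridiagOnes_mulVec_apply [NonAssocSemiring R] (v : Fin m → R) (i : Fin m) :
    (tridiagOnes R m *ᵥ v) i = padVec v i + padVec v (i + 1) + padVec v (i + 2) := by
  simp only [mulVec, dotProduct, tridiagOnes_apply_eq_add, add_mul, ite_mul, one_mul, zero_mul,
    Finset.sum_add_distrib, padVec_eq_sum]

end tridiagOnes

def threeCycle (R : Type*) [Zero R] [One R] [Neg R] (k : ℕ) : R :=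
  if k % 3 = 0 then 0 else if k % 3 = 1 then 1 else -1

section threeCycle

variable {R : Type*} [CommRing R]

theorem threeCycle_add_add (k : ℕ) :
    threeCycle R k + threeCycle R (k + 1) + threeCycle R (k + 2) = 0 := by
  have : k % 3 = 0 ∨ k % 3 = 1 ∨ k % 3 = 2 := by omega
  rcases this with h | h | h <;> simp [threeCycle, Nat.add_mod, h]

theorem threeCycle_ne_zero [Nontrivial R] {k : ℕ} (hk : k % 3 ≠ 0) : threeCycle R k ≠ 0 := by
  unfold threeCycle; split_ifs <;> simp_all

theorem eq_mul_threeCycle_of_add_add (w : ℕ → R) (N : ℕ) (h0 : w 0 = 0)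
    (hrec : ∀ k < N, w k + w (k + 1) + w (k + 2) = 0) :
    ∀ k ≤ N + 1, w k = w 1 * threeCycle R k := by
  intro k
  induction k using Nat.twoStepInduction with
  | zero => simp [h0, threeCycle]
  | one => simp [threeCycle]
  | more k ih₀ ih₁ =>
    intro hk
    linear_combination hrec k (by omega) - ih₀ (by omega) - ih₁ (by omega)
      - w 1 * threeCycle_add_add (R := R) k

end threeCycle

theorem det_tridiagOnes_eq_zero_iff {R : Type*} [CommRing R] [IsDomain R] (m : ℕ) :
    (tridiagOnes R m).det = 0 ↔ m % 3 = 2 := by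
  rw [← exists_mulVec_eq_zero_iff]
  constructor
  · rintro ⟨v, hv, hTv⟩
    by_contra hm
    have hrec : ∀ k < m, padVec v k + padVec v (k + 1) + padVec v (k + 2) = 0 := fun k hk => by
      simpa [tridiagOnes_mulVec_apply] using congrFun hTv ⟨k, hk⟩
    have hw := eq_mul_threeCycle_of_add_add (padVec v) m (padVec_zero v) hrec
    have hw1 : padVec v 1 = 0 := by
      have := hw (m + 1) le_rfl
      rw [padVec_length_succ, eq_comm, mul_eq_zero] at this
      exact this.resolve_right (threeCycle_ne_zero (by omega))
    refine hv (funext fun a => ?_)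
    rw [Pi.zero_apply, ← padVec_val_succ v a, hw _ (by omega), hw1, zero_mul]
  · intro hm
    refine ⟨fun a => threeCycle R (a + 1), fun h => ?_, funext fun i => ?_⟩
    · have := congrFun h ⟨0, by omega⟩
      simp [threeCycle] at this
    · have hf0 : threeCycle R 0 = 0 := by simp [threeCycle]
      have hfm : threeCycle R (m + 1) = 0 := by simp [threeCycle, Nat.add_mod, hm]
      rw [tridiagOnes_mulVec_apply, Pi.zero_apply, padVec_comp_succ _ hf0 hfm (by omega),
        padVec_comp_succ _ hf0 hfm (by omega), padVec_comp_succ _ hf0 hfm (by omega)]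
      exact threeCycle_add_add i

theorem padZ_eq_padVec {m n : ℕ} (X : Matrix (Fin m) (Fin n) ℝ) (p q : ℕ) :
    padZ X p q = padVec (fun a => padVec (X a) q) p := by
  unfold padZ padVec
  split_ifs <;> first | rfl | omega

theorem convZ_boxFilter {m n : ℕ} (X : Matrix (Fin m) (Fin n) ℝ) :
    convZ boxFilter X = (9 : ℝ)⁻¹ • (tridiagOnes ℝ m * X * tridiagOnes ℝ n) := by
  ext i j
  have hrow : ∀ a, (X * tridiagOnes ℝ n) a j = (tridiagOnes ℝ n *ᵥ X a) j := fun a => by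
    rw [← tridiagOnes_transpose, mulVec_transpose, tridiagOnes_transpose]; rfl
  have hsub : ∀ k : ℕ, k + 2 - 1 = k + 1 := fun k => by omega
  rw [Matrix.smul_apply, Matrix.mul_assoc, show (tridiagOnes ℝ m * (X * tridiagOnes ℝ n)) i j
    = (tridiagOnes ℝ m *ᵥ fun a => (X * tridiagOnes ℝ n) a j) i from rfl]
  simp only [hrow, tridiagOnes_mulVec_apply, padVec_add, convZ, boxFilter, of_apply,
    Fin.sum_univ_three, Fin.val_zero, Fin.val_one, Fin.val_two, padZ_eq_padVec, Nat.sub_zero,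
    hsub, Nat.add_sub_cancel, smul_eq_mul]
  ring

theorem not_exists_eq_three_mul_sub_one_iff (m : ℕ) :
    (¬ ∃ l : ℕ, 0 < l ∧ m = 3 * l - 1) ↔ m % 3 ≠ 2 := by
  refine not_congr ⟨?_, fun h => ⟨(m + 1) / 3, by omega, by omega⟩⟩
  rintro ⟨l, hl, rfl⟩
  omega

/-- The convolution equation with the box blur filter and zero boundary condition has a unique
solution for every `B` iff neither `m` nor `n` is of the form `3l − 1`, `l ≥ 1`. -/
theorem stmt8 (m n : ℕ) (hm : 0 < m) (hn : 0 < n) :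
    (∀ B : Matrix (Fin m) (Fin n) ℝ, ∃! X : Matrix (Fin m) (Fin n) ℝ, convZ boxFilter X = B)
      ↔ (¬ ∃ l : ℕ, 0 < l ∧ m = 3 * l - 1) ∧ (¬ ∃ l : ℕ, 0 < l ∧ n = 3 * l - 1) := by
  have : Nonempty (Fin m) := Fin.pos_iff_nonempty.mp hm
  have : Nonempty (Fin n) := Fin.pos_iff_nonempty.mp hn
  have hconv : convZ boxFilter =
      fun X : Matrix (Fin m) (Fin n) ℝ => ((9 : ℝ)⁻¹ • tridiagOnes ℝ m) * X * tridiagOnes ℝ n :=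
    funext fun X => by rw [convZ_boxFilter, Matrix.smul_mul, Matrix.smul_mul]
  rw [← Function.bijective_iff_existsUnique, hconv, Matrix.bijective_mul_mul_iff, det_smul,
    not_exists_eq_three_mul_sub_one_iff, not_exists_eq_three_mul_sub_one_iff]
  simp [det_tridiagOnes_eq_zero_iff]
end
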